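/- Suppose w : [0,∞) → (0,∞) is continuous and satisfies w(t) ≤ a e^{−t/c} + b ∫₀^t e^{−(t−τ)/c}(d + e·w(τ)) dτ for all t ≥ 0, with positive constants a, b, c, d, e satisfying b·e·c < 1. Then w is bounded: w(t) ≤ (a + b·d·c)/(1 − b·e·c) for all t ≥ 0. -/

import Mathlib

/-!
Let `s` be a maximum point of `w` on `[0, t]`. Bounding `w` by `w s` under the integral and
integrating the kernel exactly, the hypothesis at `s` says that `w s` is at most the convex
combination `x a + (1 - x) b c (d + e w s)` with `x = exp (-s / c) ∈ [0, 1]`, hence at most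
`max a (b d c + b e c w s)`; since `b e c < 1`, either alternative yields the bound.
-/

open Real Set

theorem integral_exp_neg_sub_div {c : ℝ} (hc : c ≠ 0) (t : ℝ) :
    ∫ τ in (0 : ℝ)..t, exp (-(t - τ) / c) = c * (1 - exp (-t / c)) := by
  have hderiv (τ : ℝ) : HasDerivAt (fun τ => c * exp (-(t - τ) / c)) (exp (-(t - τ) / c)) τ := by
    have h : HasDerivAt (fun τ => -(t - τ) / c) (1 / c) τ := by
      simpa using ((hasDerivAt_id' τ).const_sub t).neg.div_const c
    exact (h.exp.const_mul c).congr_deriv (by field_simp)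
  rw [intervalIntegral.integral_eq_sub_of_hasDerivAt (fun τ _ => hderiv τ)
    (Continuous.intervalIntegrable (by fun_prop) _ _)]
  simp only [sub_self, neg_zero, zero_div, exp_zero, sub_zero]
  ring

theorem integral_exp_kernel_mul_le {c d e K t : ℝ} {w : ℝ → ℝ} (hc : c ≠ 0) (ht : 0 ≤ t)
    (he : 0 ≤ e) (hw : ContinuousOn w (Icc 0 t)) (hwK : ∀ τ ∈ Icc 0 t, w τ ≤ K) :
    ∫ τ in (0 : ℝ)..t, exp (-(t - τ) / c) * (d + e * w τ) ≤
      c * (1 - exp (-t / c)) * (d + e * K) := by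
  rw [← integral_exp_neg_sub_div hc, ← intervalIntegral.integral_mul_const]
  refine intervalIntegral.integral_mono_on ht ?_
    (Continuous.intervalIntegrable (by fun_prop) _ _) fun τ hτ => ?_
  · apply ContinuousOn.intervalIntegrable
    rw [uIcc_of_le ht]
    fun_prop
  · gcongr
    exact hwK τ hτ

theorem le_div_of_le_max_add_mul {m a p q : ℝ} (ha : 0 ≤ a) (hp : 0 ≤ p) (hq : 0 ≤ q)
    (hq1 : q < 1) (hm : m ≤ max a (p + q * m)) : m ≤ (a + p) / (1 - q) := by
  rw [le_div_iff₀ (sub_pos.2 hq1)]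
  rcases le_max_iff.1 hm with h | h <;> nlinarith

theorem stmt_19_general (w : ℝ → ℝ) (a b c d e : ℝ)
    (ha : 0 < a) (hb : 0 < b) (hc : 0 < c) (hd : 0 < d) (he : 0 < e)
    (hcont : ContinuousOn w (Set.Ici 0))
    (hsmall : b * e * c < 1)
    (hineq : ∀ t : ℝ, 0 ≤ t →
      w t ≤ a * Real.exp (-t / c) +
        b * ∫ τ in (0:ℝ)..t, Real.exp (-(t - τ) / c) * (d + e * w τ)) :
    ∀ t : ℝ, 0 ≤ t → w t ≤ (a + b * d * c) / (1 - b * e * c) := by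
  intro t ht
  obtain ⟨s, hs, hmax⟩ := isCompact_Icc.exists_isMaxOn (nonempty_Icc.2 ht)
    (hcont.mono Icc_subset_Ici_self)
  have hx0 : 0 ≤ exp (-s / c) := (exp_pos _).le
  have hx1 : exp (-s / c) ≤ 1 :=
    exp_le_one_iff.2 (div_nonpos_of_nonpos_of_nonneg (neg_nonpos.2 hs.1) hc.le)
  have hws : w s ≤ max a (b * d * c + b * e * c * w s) := calc
    w s ≤ a * exp (-s / c) + b * ∫ τ in (0:ℝ)..s, exp (-(s - τ) / c) * (d + e * w τ) :=
      hineq s hs.1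
    _ ≤ a * exp (-s / c) + b * (c * (1 - exp (-s / c)) * (d + e * w s)) := by
      gcongr
      exact integral_exp_kernel_mul_le hc.ne' hs.1 he.le
        (hcont.mono fun τ hτ => hτ.1) fun τ hτ => hmax ⟨hτ.1, hτ.2.trans hs.2⟩
    _ = exp (-s / c) • a + (1 - exp (-s / c)) • (b * d * c + b * e * c * w s) := by
      simp only [smul_eq_mul]; ring
    _ ≤ _ := Convex.combo_le_max _ _ hx0 (sub_nonneg.2 hx1) (add_sub_cancel _ _)
  exact (hmax ⟨ht, le_rfl⟩).trans <| le_div_of_le_max_add_mul ha.le (by positivity)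
    (by positivity) hsmall hws

/-- Convolution-type Gronwall estimate: if w is continuous positive with
w(t) ≤ a e^{−t/c} + b ∫₀^t e^{−(t−τ)/c}(d + e w(τ)) dτ and b·e·c < 1, then
w(t) ≤ (a + b·d·c)/(1 − b·e·c) for all t ≥ 0. -/
theorem stmt_19 (w : ℝ → ℝ) (a b c d e : ℝ)
    (ha : 0 < a) (hb : 0 < b) (hc : 0 < c) (hd : 0 < d) (he : 0 < e)
    (hcont : ContinuousOn w (Set.Ici 0))
    (hpos : ∀ t : ℝ, 0 ≤ t → 0 < w t)
    (hsmall : b * e * c < 1)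
    (hineq : ∀ t : ℝ, 0 ≤ t →
      w t ≤ a * Real.exp (-t / c) +
        b * ∫ τ in (0:ℝ)..t, Real.exp (-(t - τ) / c) * (d + e * w τ)) :
    ∀ t : ℝ, 0 ≤ t → w t ≤ (a + b * d * c) / (1 - b * e * c) :=
  stmt_19_general w a b c d e ha hb hc hd he hcont hsmall hineq
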